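/- arXiv:2408.17213 — 6 statements merged into one kernel-verified Lean document; each statement's English description precedes it below -/
import Mathlib

section
/- Let f: ℝⁿ × ℝᵖ → ℝ be continuously differentiable with ∇f L_f-Lipschitz, r₂: ℝᵖ → ℝ convex, Y ⊆ ℝᵖ closed convex, η > 0. Define T(x,y) = argmax_{v ∈ Y} [f(x,y) + ⟨∇_y f(x,y), v - y⟩ - r₂(v) - (1/(2η))‖v - y‖²] and Ψ_η(x,y) as the corresponding maximum value, and R(x,y) = (T(x,y) - y)/η. Then for all (x,y) with y ∈ Y: Ψ_η(x,y) ≥ f(x,y) - r₂(y) + (η/2)‖R(x,y)‖². -/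
open scoped RealInnerProductSpace

/-- First PFBE inequality: `Ψ_η(x,y) ≥ f(x,y) - r₂(y) + (η/2)‖R(x,y)‖²`. -/
theorem stmt_5 {n p : ℕ} (Lf : ℝ) (hLf : 0 < Lf)
    (f : EuclideanSpace ℝ (Fin n) → EuclideanSpace ℝ (Fin p) → ℝ)
    (G : EuclideanSpace ℝ (Fin n) → EuclideanSpace ℝ (Fin p) → EuclideanSpace ℝ (Fin p))
    (hgrad : ∀ x y, HasGradientAt (f x) (G x y) y)
    (hLip : LipschitzWith (Real.toNNReal Lf) (fun q : (EuclideanSpace ℝ (Fin n)) × (EuclideanSpace ℝ (Fin p)) => G q.1 q.2))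
    (Y : Set (EuclideanSpace ℝ (Fin p))) (hYc : IsClosed Y) (hYconv : Convex ℝ Y)
    (r₂ : EuclideanSpace ℝ (Fin p) → ℝ) (hr₂ : ConvexOn ℝ Set.univ r₂)
    (η : ℝ) (hη : 0 < η)
    (x : EuclideanSpace ℝ (Fin n)) (y : EuclideanSpace ℝ (Fin p)) (hy : y ∈ Y)
    (T : EuclideanSpace ℝ (Fin p)) (hT : T ∈ Y)
    (hTmax : ∀ v ∈ Y,
      f x y + ⟪G x y, v - y⟫ - r₂ v - 1 / (2 * η) * ‖v - y‖ ^ 2 ≤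
      f x y + ⟪G x y, T - y⟫ - r₂ T - 1 / (2 * η) * ‖T - y‖ ^ 2)
    (Ψ : ℝ) (hΨ : Ψ = f x y + ⟪G x y, T - y⟫ - r₂ T - 1 / (2 * η) * ‖T - y‖ ^ 2)
    (R : EuclideanSpace ℝ (Fin p)) (hR : R = (1 / η) • (T - y)) :
    Ψ ≥ f x y - r₂ y + η / 2 * ‖R‖ ^ 2 := by
  set d := T - y with hd
  set c : ℝ := ‖d‖ ^ 2 / (2 * η) with hc
  set A : ℝ := ⟪G x y, d⟫ + r₂ y - r₂ T with hA
  have hc0 : 0 ≤ c := by positivity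
  -- key: for t ∈ [0,1), (1+t)*c ≤ A
  have key : ∀ t ∈ Set.Ico (0:ℝ) 1, (1 + t) * c ≤ A := by
    intro t ht
    obtain ⟨ht0, ht1⟩ := ht
    have h1t : 0 < 1 - t := by linarith
    have hv : (1 - t) • y + t • T ∈ Y := hYconv hy hT (by linarith) ht0 (by ring)
    have hvy : (1 - t) • y + t • T - y = t • d := by
      simp only [hd]; module
    have hmax := hTmax _ hv
    rw [hvy] at hmax
    have hr : r₂ ((1 - t) • y + t • T) ≤ (1 - t) * r₂ y + t * r₂ T := by
      have := hr₂.2 (Set.mem_univ y) (Set.mem_univ T) (by linarith : (0:ℝ) ≤ 1 - t) ht0 (by ring)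
      simpa using this
    have hip : ⟪G x y, t • d⟫ = t * ⟪G x y, d⟫ := real_inner_smul_right _ _ _
    have hnorm : ‖t • d‖ ^ 2 = t ^ 2 * ‖d‖ ^ 2 := by
      rw [norm_smul]; rw [Real.norm_eq_abs]
      rw [mul_pow, sq_abs]
    rw [hip, hnorm] at hmax
    have hη2 : (0:ℝ) < 2 * η := by linarith
    have hce : ‖d‖ ^ 2 = c * (2 * η) := by
      rw [hc, div_mul_cancel₀ _ hη2.ne']
    rw [hce] at hmax
    have h2 : 1 / (2 * η) * (t ^ 2 * (c * (2 * η))) = t ^ 2 * c := by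
      field_simp
    have h3 : 1 / (2 * η) * (c * (2 * η)) = c := by field_simp
    rw [h2, h3] at hmax
    have h : (1 - t) * ((1 + t) * c) ≤ (1 - t) * A := by nlinarith [hmax, hr]
    exact le_of_mul_le_mul_left h h1t
  -- take limit t → 1⁻ to get 2*c ≤ A
  have h2c : 2 * c ≤ A := by
    have htend : Filter.Tendsto (fun t : ℝ => (1 + t) * c) (nhdsWithin 1 (Set.Iio 1)) (nhds (2 * c)) := by
      have : Filter.Tendsto (fun t : ℝ => (1 + t) * c) (nhds 1) (nhds ((1 + 1) * c)) := by
        exact Filter.Tendsto.mul_const c (by exact (continuous_const.add continuous_id).tendsto 1)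
      have := this.mono_left (nhdsWithin_le_nhds (s := Set.Iio 1))
      simpa [two_mul, add_mul] using this
    refine le_of_tendsto htend ?_
    have hself : ∀ᶠ t in nhdsWithin (1:ℝ) (Set.Iio 1), t < 1 :=
      eventually_mem_nhdsWithin
    have hpos : ∀ᶠ t in nhdsWithin (1:ℝ) (Set.Iio 1), (0:ℝ) < t := by
      apply Filter.Eventually.filter_mono nhdsWithin_le_nhds
      exact eventually_gt_nhds (by norm_num)
    filter_upwards [hself, hpos] with t ht1 ht0
    exact key t ⟨le_of_lt ht0, ht1⟩
  -- conclude
  have hRnorm : ‖R‖ ^ 2 = (1 / η) ^ 2 * ‖d‖ ^ 2 := by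
    rw [hR, norm_smul, Real.norm_eq_abs, mul_pow, sq_abs]
  have hfinal : η / 2 * ‖R‖ ^ 2 = c := by
    rw [hRnorm, hc]; field_simp
  have hΨc : Ψ = f x y + ⟪G x y, d⟫ - r₂ T - c := by
    rw [hΨ, hc]; field_simp
  rw [hΨc, hfinal]
  linarith [h2c]
end

section
/- Under the same setting as the partial forward-backward envelope, if ∇f is L_f-Lipschitz, then for all (x, y) with y ∈ Y: f(x, T(x,y)) - r₂(T(x,y)) ≥ Ψ_η(x,y) + (η(1 - ηL_f)/2)‖R(x,y)‖². -/
open scoped RealInnerProductSpace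

/-- Descent lemma: if the gradient of `φ` is `L`-Lipschitz then
`φ z ≤ φ y + ⟪G y, z - y⟫ + L/2 ‖z - y‖²`. -/
lemma descent_lemma {p : ℕ} (L : ℝ) (hL : 0 ≤ L)
    (φ : EuclideanSpace ℝ (Fin p) → ℝ) (G : EuclideanSpace ℝ (Fin p) → EuclideanSpace ℝ (Fin p))
    (hgrad : ∀ y, HasGradientAt φ (G y) y)
    (hLip : ∀ a b, ‖G a - G b‖ ≤ L * ‖a - b‖)
    (y z : EuclideanSpace ℝ (Fin p)) :
    φ y + ⟪G y, z - y⟫ - L / 2 * ‖z - y‖ ^ 2 ≤ φ z := by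
  set d := z - y with hd
  set c : ℝ → EuclideanSpace ℝ (Fin p) := fun t => y + t • d with hc
  set g : ℝ → ℝ := fun t => φ (c t) - t * ⟪G y, d⟫ + t ^ 2 * (L / 2 * ‖d‖ ^ 2) with hg
  have hcder : ∀ t : ℝ, HasDerivAt c d t := by
    intro t
    simpa [hc] using ((hasDerivAt_id t).smul_const d).const_add y
  have hgder : ∀ t : ℝ, HasDerivAt g
      (⟪G (c t), d⟫ - ⟪G y, d⟫ + 2 * t * (L / 2 * ‖d‖ ^ 2)) t := by
    intro t
    have h1 : HasDerivAt (fun t => φ (c t)) (⟪G (c t), d⟫) t := by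
      have hf : HasFDerivAt φ ((InnerProductSpace.toDual ℝ _) (G (c t))) (c t) := hgrad (c t)
      simpa [InnerProductSpace.toDual_apply_apply, Function.comp_def] using hf.comp_hasDerivAt t (hcder t)
    have h2 : HasDerivAt (fun t : ℝ => t * ⟪G y, d⟫) (⟪G y, d⟫) t := by
      simpa using (hasDerivAt_id t).mul_const (⟪G y, d⟫)
    have h3 : HasDerivAt (fun t : ℝ => t ^ 2 * (L / 2 * ‖d‖ ^ 2))
        (2 * t * (L / 2 * ‖d‖ ^ 2)) t := by
      simpa using ((hasDerivAt_pow 2 t).mul_const (L / 2 * ‖d‖ ^ 2))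
    exact (h1.sub h2).add h3
  have hmono : MonotoneOn g (Set.Icc (0 : ℝ) 1) := by
    apply monotoneOn_of_deriv_nonneg (convex_Icc 0 1)
    · exact fun t _ => ((hgder t).differentiableAt).continuousAt.continuousWithinAt
    · exact fun t _ => ((hgder t).differentiableAt).differentiableWithinAt
    · intro t ht
      rw [interior_Icc] at ht
      rw [(hgder t).deriv]
      have hinner : |⟪G (c t) - G y, d⟫| ≤ L * t * ‖d‖ ^ 2 := by
        calc |⟪G (c t) - G y, d⟫| ≤ ‖G (c t) - G y‖ * ‖d‖ := abs_real_inner_le_norm _ _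
          _ ≤ (L * ‖c t - y‖) * ‖d‖ := by
              apply mul_le_mul_of_nonneg_right (hLip _ _) (norm_nonneg _)
          _ = L * t * ‖d‖ ^ 2 := by
              have : ‖c t - y‖ = t * ‖d‖ := by
                simp [hc, norm_smul, abs_of_nonneg ht.1.le]
              rw [this]; ring
      have : ⟪G (c t) - G y, d⟫ = ⟪G (c t), d⟫ - ⟪G y, d⟫ := by
        rw [inner_sub_left]
      nlinarith [hinner, abs_nonneg (⟪G (c t) - G y, d⟫), neg_abs_le (⟪G (c t) - G y, d⟫)]
  have hkey : g 0 ≤ g 1 := hmono (by norm_num) (by norm_num) zero_le_one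
  have hc1 : c 1 = z := by simp [hc, hd]
  have hc0 : c 0 = y := by simp [hc]
  simp only [hg, hc1, hc0, one_mul, one_pow, zero_mul, pow_two, mul_zero, zero_pow,
    sub_zero, ne_eq, OfNat.ofNat_ne_zero, not_false_eq_true] at hkey
  linarith

/-- Second PFBE inequality:
`f(x,T(x,y)) - r₂(T(x,y)) ≥ Ψ_η(x,y) + (η(1-ηL_f)/2)‖R(x,y)‖²`. -/
theorem stmt_6 {n p : ℕ} (Lf : ℝ) (hLf : 0 < Lf)
    (f : EuclideanSpace ℝ (Fin n) → EuclideanSpace ℝ (Fin p) → ℝ)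
    (G : EuclideanSpace ℝ (Fin n) → EuclideanSpace ℝ (Fin p) → EuclideanSpace ℝ (Fin p))
    (hgrad : ∀ x y, HasGradientAt (f x) (G x y) y)
    (hLip : LipschitzWith (Real.toNNReal Lf) (fun q : (EuclideanSpace ℝ (Fin n)) × (EuclideanSpace ℝ (Fin p)) => G q.1 q.2))
    (Y : Set (EuclideanSpace ℝ (Fin p))) (hYc : IsClosed Y) (hYconv : Convex ℝ Y)
    (r₂ : EuclideanSpace ℝ (Fin p) → ℝ) (hr₂ : ConvexOn ℝ Set.univ r₂)
    (η : ℝ) (hη : 0 < η)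
    (x : EuclideanSpace ℝ (Fin n)) (y : EuclideanSpace ℝ (Fin p)) (hy : y ∈ Y)
    (T : EuclideanSpace ℝ (Fin p)) (hT : T ∈ Y)
    (hTmax : ∀ v ∈ Y,
      f x y + ⟪G x y, v - y⟫ - r₂ v - 1 / (2 * η) * ‖v - y‖ ^ 2 ≤
      f x y + ⟪G x y, T - y⟫ - r₂ T - 1 / (2 * η) * ‖T - y‖ ^ 2)
    (Ψ : ℝ) (hΨ : Ψ = f x y + ⟪G x y, T - y⟫ - r₂ T - 1 / (2 * η) * ‖T - y‖ ^ 2)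
    (R : EuclideanSpace ℝ (Fin p)) (hR : R = (1 / η) • (T - y)) :
    f x T - r₂ T ≥ Ψ + η * (1 - η * Lf) / 2 * ‖R‖ ^ 2 := by
  have hLipx : ∀ a b, ‖G x a - G x b‖ ≤ Lf * ‖a - b‖ := by
    intro a b
    have := hLip.dist_le_mul (x, a) (x, b)
    simp only [dist_eq_norm] at this ⊢
    calc ‖G x a - G x b‖ ≤ (Real.toNNReal Lf : ℝ) * ‖((x, a) : _ × _) - (x, b)‖ := this
      _ = Lf * ‖a - b‖ := by
          rw [Real.coe_toNNReal _ hLf.le]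
          congr 1
          rw [Prod.norm_def]
          simp
  have hdesc := descent_lemma Lf hLf.le (f x) (G x) (hgrad x) hLipx y T
  have hRnorm : ‖R‖ ^ 2 = (1 / η) ^ 2 * ‖T - y‖ ^ 2 := by
    rw [hR, norm_smul, mul_pow, Real.norm_eq_abs, sq_abs]
  rw [hΨ, hRnorm]
  have hη' : η ≠ 0 := hη.ne'
  have h1 : η * (1 - η * Lf) / 2 * ((1 / η) ^ 2 * ‖T - y‖ ^ 2)
      = (1 / (2 * η) - Lf / 2) * ‖T - y‖ ^ 2 := by
    field_simp
  rw [h1]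
  linarith
end

section
/- Let f: ℝⁿ × ℝᵖ → ℝ be C², μ-strongly concave in y for each x, with ∇f L_f-Lipschitz; let r₂ be convex, Y closed convex, η > 0, α ≥ max{1, 2/(ημ)}. Suppose (x̃, ỹ) ∈ X × Y satisfies the stationarity conditions of the penalized problem: 0 ∈ ∇_x f(x̃,ỹ) + αη∇²_{xy}f(x̃,ỹ)R(x̃,ỹ) + ∂r₁(x̃) + N_X(x̃) and 0 ∈ (I + αη∇²_{yy}f(x̃,ỹ))R(x̃,ỹ) + (α-1)(R(x̃,ỹ) - ∇_y f(x̃,ỹ) + ∂r₂(ỹ)) + N_Y(ỹ). Then R(x̃,ỹ) = 0. -/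
open scoped RealInnerProductSpace

set_option maxHeartbeats 1000000

/-- If `(x̃, ỹ)` is a first-order stationary point of the penalized problem (MMPen) with
`α ≥ max{1, 2/(ημ)}`, then the residual `R(x̃, ỹ)` vanishes (Theorem `Theo_Equivalence_Gamma`,
"if" direction, key step). -/
theorem stmt_13 {n p : ℕ} (μ Lf η α : ℝ) (hμ : 0 < μ) (hη : 0 < η)
    (hα : α ≥ max 1 (2 / (η * μ)))
    (f : EuclideanSpace ℝ (Fin n) → EuclideanSpace ℝ (Fin p) → ℝ)
    (Gy : EuclideanSpace ℝ (Fin n) → EuclideanSpace ℝ (Fin p) → EuclideanSpace ℝ (Fin p))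
    (Hyy : EuclideanSpace ℝ (Fin p) →L[ℝ] EuclideanSpace ℝ (Fin p))
    (Hxy : EuclideanSpace ℝ (Fin p) →L[ℝ] EuclideanSpace ℝ (Fin n))
    (hgrad : ∀ x y, HasGradientAt (f x) (Gy x y) y)
    (hLip : LipschitzWith (Real.toNNReal Lf)
      (fun q : (EuclideanSpace ℝ (Fin n)) × (EuclideanSpace ℝ (Fin p)) => Gy q.1 q.2))
    (hconc : ∀ x, StrongConcaveOn Set.univ μ (f x))
    (X : Set (EuclideanSpace ℝ (Fin n))) (hXc : IsClosed X)
    (Y : Set (EuclideanSpace ℝ (Fin p))) (hYc : IsClosed Y) (hYconv : Convex ℝ Y)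
    (r₂ : EuclideanSpace ℝ (Fin p) → ℝ) (hr₂ : ConvexOn ℝ Set.univ r₂)
    (xt : EuclideanSpace ℝ (Fin n)) (yt : EuclideanSpace ℝ (Fin p))
    (hxt : xt ∈ X) (hyt : yt ∈ Y)
    (hhess : HasFDerivAt (Gy xt) Hyy yt)
    (hHyy : ∀ d : EuclideanSpace ℝ (Fin p), ⟪d, Hyy d⟫ ≤ -μ * ‖d‖ ^ 2)
    (T : EuclideanSpace ℝ (Fin p)) (hT : T ∈ Y)
    (hTmax : ∀ v ∈ Y,
      f xt yt + ⟪Gy xt yt, v - yt⟫ - r₂ v - 1 / (2 * η) * ‖v - yt‖ ^ 2 ≤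
      f xt yt + ⟪Gy xt yt, T - yt⟫ - r₂ T - 1 / (2 * η) * ‖T - yt‖ ^ 2)
    (R : EuclideanSpace ℝ (Fin p)) (hR : R = (1 / η) • (T - yt))
    (sr1 NX : Set (EuclideanSpace ℝ (Fin n))) (Gx : EuclideanSpace ℝ (Fin n))
    (hGx : HasGradientAt (fun x => f x yt) Gx xt)
    (hxstat : ∃ a ∈ sr1, ∃ nX ∈ NX,
      (0 : EuclideanSpace ℝ (Fin n)) = Gx + (α * η) • Hxy R + a + nX)
    (hystat : ∃ g, (∀ z, r₂ z ≥ r₂ yt + ⟪g, z - yt⟫) ∧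
      ∃ nY, (∀ z ∈ Y, ⟪nY, z - yt⟫ ≤ 0) ∧
        (0 : EuclideanSpace ℝ (Fin p)) =
          (R + (α * η) • Hyy R) + (α - 1) • (R - Gy xt yt + g) + nY) :
    R = 0 := by
  obtain ⟨g, hg, nY, hnY, heq⟩ := hystat
  have hηne : (η:ℝ) ≠ 0 := hη.ne'
  have hD : T - yt = η • R := by
    rw [hR, smul_smul, mul_one_div, div_self hηne, one_smul]
  have hα1 : (1:ℝ) ≤ α := le_trans (le_max_left _ _) hα
  have hημ : 0 < η * μ := mul_pos hη hμ
  have hαμ : 2 ≤ α * (η * μ) := by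
    have h2 : 2 / (η * μ) ≤ α := le_trans (le_max_right _ _) hα
    calc (2:ℝ) = (2 / (η * μ)) * (η * μ) := by field_simp
    _ ≤ α * (η * μ) := by nlinarith
  set C : ℝ := ⟪Gy xt yt, T - yt⟫ - r₂ T + r₂ yt with hCdef
  set a : ℝ := ‖T - yt‖ ^ 2 / (2 * η) with hadef
  have ha0 : 0 ≤ a := by positivity
  have key : ∀ t : ℝ, 0 < t → t < 1 → (1 + t) * a ≤ C := by
    intro t ht0 ht1
    have hveq : yt + t • (T - yt) = (1 - t) • yt + t • T := by module
    have hv : yt + t • (T - yt) ∈ Y := by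
      rw [hveq]
      exact hYconv hyt hT (by linarith) (le_of_lt ht0) (by ring)
    have hmax := hTmax _ hv
    rw [add_sub_cancel_left] at hmax
    have hr : r₂ ((1 - t) • yt + t • T) ≤ (1 - t) * r₂ yt + t * r₂ T := by
      have := hr₂.2 (Set.mem_univ yt) (Set.mem_univ T)
        (by linarith : (0:ℝ) ≤ 1 - t) (le_of_lt ht0) (by ring)
      simpa [smul_eq_mul] using this
    rw [hveq] at hmax
    have hin : ⟪Gy xt yt, t • (T - yt)⟫ = t * ⟪Gy xt yt, T - yt⟫ :=
      real_inner_smul_right _ _ _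
    have hns : ‖t • (T - yt)‖ ^ 2 = t ^ 2 * ‖T - yt‖ ^ 2 := by
      rw [norm_smul, Real.norm_eq_abs, abs_of_pos ht0]; ring
    rw [hin, hns] at hmax
    have h1t : (0:ℝ) < 1 - t := by linarith
    have hae : ‖T - yt‖ ^ 2 = 2 * η * a := by
      rw [hadef]; field_simp
    rw [hae] at hmax
    have e1 : 1 / (2 * η) * (t ^ 2 * (2 * η * a)) = t ^ 2 * a := by
      field_simp
    have e2 : 1 / (2 * η) * (2 * η * a) = a := by
      field_simp
    rw [e1, e2] at hmax
    have hmain : (1 - t) * ((1 + t) * a) ≤ (1 - t) * C := by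
      have hc : (1 - t) * C = ⟪Gy xt yt, T - yt⟫ - r₂ T + r₂ yt
          - t * ⟪Gy xt yt, T - yt⟫ + t * r₂ T - t * r₂ yt := by
        rw [hCdef]; ring
      nlinarith [hmax, hr]
    exact le_of_mul_le_mul_left hmain h1t
  have hK : 2 * a ≤ C := by
    by_contra hcon
    push_neg at hcon
    have h12 := key (1/2) (by norm_num) (by norm_num)
    have hapos : 0 < a := by nlinarith
    set t : ℝ := (C + 2 * a) / (4 * a) with htdef
    have ht0 : 0 < t := by
      apply div_pos _ (by linarith)
      nlinarith
    have ht1 : t < 1 := by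
      rw [htdef, div_lt_one (by linarith)]
      linarith
    have hkt := key t ht0 ht1
    have hta : t * a = (C + 2 * a) / 4 := by
      rw [htdef, div_mul_eq_mul_div, mul_comm (C + 2 * a) a, mul_comm (4:ℝ) a,
        mul_div_mul_left _ _ (ne_of_gt hapos)]
    nlinarith
  have hgT := hg T
  have hGgD : ⟪Gy xt yt, T - yt⟫ - ⟪g, T - yt⟫ ≥ 2 * a := by
    rw [hCdef] at hK; linarith
  have hnsq : ‖T - yt‖ ^ 2 = η ^ 2 * ‖R‖ ^ 2 := by
    rw [hD, norm_smul, Real.norm_eq_abs, abs_of_pos hη]; ring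
  have hGR : ⟪Gy xt yt, R⟫ - ⟪g, R⟫ ≥ ‖R‖ ^ 2 := by
    have e1 : ⟪Gy xt yt, T - yt⟫ = η * ⟪Gy xt yt, R⟫ := by
      rw [hD, real_inner_smul_right]
    have e2 : ⟪g, T - yt⟫ = η * ⟪g, R⟫ := by
      rw [hD, real_inner_smul_right]
    have ea : 2 * a = η * ‖R‖ ^ 2 := by
      rw [hadef, hnsq]; field_simp
    rw [e1, e2, ea] at hGgD
    have := (mul_le_mul_iff_right₀ hη).mp (by linarith : η * ‖R‖ ^ 2 ≤ η * (⟪Gy xt yt, R⟫ - ⟪g, R⟫))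
    linarith
  have hq : ⟪R, R - Gy xt yt + g⟫ ≤ 0 := by
    rw [inner_add_right, inner_sub_right, real_inner_self_eq_norm_sq]
    rw [real_inner_comm (Gy xt yt) R, real_inner_comm g R]
    linarith
  have hRnY : ⟪R, nY⟫ ≤ 0 := by
    have h1 := hnY T hT
    rw [hD, real_inner_smul_right] at h1
    have h2 : ⟪nY, R⟫ ≤ 0 := nonpos_of_mul_nonpos_right h1 hη
    rwa [real_inner_comm]
  have hHR := hHyy R
  have hinner : (0:ℝ) = ‖R‖ ^ 2 + (α * η) * ⟪R, Hyy R⟫ +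
      (α - 1) * ⟪R, R - Gy xt yt + g⟫ + ⟪R, nY⟫ := by
    have h0 : ⟪R, (0 : EuclideanSpace ℝ (Fin p))⟫ = 0 := inner_zero_right _
    rw [heq] at h0
    rw [inner_add_right, inner_add_right, inner_add_right,
      real_inner_smul_right, real_inner_smul_right,
      real_inner_self_eq_norm_sq] at h0
    linarith
  have hαη : 0 < α * η := mul_pos (by linarith) hη
  have hRsq : ‖R‖ ^ 2 ≤ 0 := by
    nlinarith [mul_le_mul_of_nonneg_left hHR (le_of_lt hαη),
      mul_nonpos_of_nonneg_of_nonpos (by linarith : (0:ℝ) ≤ α - 1) hq,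
      sq_nonneg ‖R‖]
  have : ‖R‖ = 0 := by
    have := le_antisymm hRsq (sq_nonneg _)
    exact pow_eq_zero_iff (by norm_num) |>.mp this
  exact norm_eq_zero.mp this
end

section
/- Under the PFBE setting with μ-strong concavity in y, η > 0, α ≥ max{1, 2/(ημ)}, suppose (x, y) ∈ X × Y satisfies the ε-approximate stationarity condition with respect to y: there exists e_y with ‖e_y‖ ≤ ε such that e_y ∈ (I + αη∇²_{yy}f(x,y))R(x,y) + (α-1)(R(x,y) - ∇_y f(x,y) + ∂r₂(y)) + N_Y(y). Then ‖R(x,y)‖ ≤ (2/(μαη))ε ≤ ε. -/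
open scoped RealInnerProductSpace

set_option maxHeartbeats 4000000

/-- ε-approximate `y`-stationarity of (MMPen) forces `‖R(x,y)‖ ≤ (2/(μαη))ε ≤ ε`
(Theorem `Theo_eps_Equivalence_Gamma`, first estimate). -/
theorem stmt_14 {n p : ℕ} (μ η α ε : ℝ) (hμ : 0 < μ) (hη : 0 < η)
    (hα : α ≥ max 1 (2 / (η * μ)))
    (f : EuclideanSpace ℝ (Fin n) → EuclideanSpace ℝ (Fin p) → ℝ)
    (Gy : EuclideanSpace ℝ (Fin n) → EuclideanSpace ℝ (Fin p) → EuclideanSpace ℝ (Fin p))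
    (Hyy : EuclideanSpace ℝ (Fin p) →L[ℝ] EuclideanSpace ℝ (Fin p))
    (hgrad : ∀ x y, HasGradientAt (f x) (Gy x y) y)
    (hconc : ∀ x, StrongConcaveOn Set.univ μ (f x))
    (Y : Set (EuclideanSpace ℝ (Fin p))) (hYc : IsClosed Y) (hYconv : Convex ℝ Y)
    (r₂ : EuclideanSpace ℝ (Fin p) → ℝ) (hr₂ : ConvexOn ℝ Set.univ r₂)
    (x : EuclideanSpace ℝ (Fin n)) (y : EuclideanSpace ℝ (Fin p)) (hy : y ∈ Y)
    (hhess : HasFDerivAt (Gy x) Hyy y)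
    (hHyy : ∀ d : EuclideanSpace ℝ (Fin p), ⟪d, Hyy d⟫ ≤ -μ * ‖d‖ ^ 2)
    (T : EuclideanSpace ℝ (Fin p)) (hT : T ∈ Y)
    (hTmax : ∀ v ∈ Y,
      f x y + ⟪Gy x y, v - y⟫ - r₂ v - 1 / (2 * η) * ‖v - y‖ ^ 2 ≤
      f x y + ⟪Gy x y, T - y⟫ - r₂ T - 1 / (2 * η) * ‖T - y‖ ^ 2)
    (R : EuclideanSpace ℝ (Fin p)) (hR : R = (1 / η) • (T - y))
    (ey : EuclideanSpace ℝ (Fin p)) (hey : ‖ey‖ ≤ ε)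
    (hystat : ∃ g, (∀ z, r₂ z ≥ r₂ y + ⟪g, z - y⟫) ∧
      ∃ nY, (∀ z ∈ Y, ⟪nY, z - y⟫ ≤ 0) ∧
        ey = (R + (α * η) • Hyy R) + (α - 1) • (R - Gy x y + g) + nY) :
    ‖R‖ ≤ 2 / (μ * α * η) * ε ∧ 2 / (μ * α * η) * ε ≤ ε := by
  obtain ⟨g, hg, nY, hnY, heq⟩ := hystat
  have hεnn : 0 ≤ ε := le_trans (norm_nonneg ey) hey
  have hα1 : (1:ℝ) ≤ α := le_trans (le_max_left _ _) hα
  have hα2 : 2 / (η * μ) ≤ α := le_trans (le_max_right _ _) hα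
  have hαημ : 2 ≤ α * η * μ := by
    rw [div_le_iff₀ (by positivity)] at hα2
    nlinarith
  set G := Gy x y with hG
  set a : ℝ := ⟪G, T - y⟫ with ha
  set N : ℝ := ‖T - y‖ ^ 2 with hN
  have hNnn : 0 ≤ N := by positivity
  set k : ℝ := 1 / (2 * η) * N with hkdef
  have hk : 2 * η * k = N := by rw [hkdef]; field_simp
  -- Step 1: key inequality from maximality of T
  have key : 2 * η * (r₂ T - r₂ y) + 2 * N ≤ 2 * η * a := by
    apply le_of_forall_pos_le_add
    intro δ hδ
    set t : ℝ := min 1 (δ / (N + 1)) with ht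
    have ht0 : 0 < t := lt_min one_pos (by positivity)
    have ht1 : t ≤ 1 := min_le_left _ _
    have htN : t * N ≤ δ := by
      have h5 : t ≤ δ / (N + 1) := min_le_right _ _
      rw [le_div_iff₀ (by positivity)] at h5
      nlinarith
    have hv : (1 - t) • T + t • y ∈ Y :=
      hYconv hT hy (by linarith) ht0.le (by ring)
    have h1 := hTmax _ hv
    have hvy : ((1 - t) • T + t • y) - y = (1 - t) • (T - y) := by module
    rw [hvy, real_inner_smul_right, norm_smul, Real.norm_eq_abs,
      abs_of_nonneg (by linarith : (0:ℝ) ≤ 1 - t)] at h1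
    have hnrm : ((1 - t) * ‖T - y‖) ^ 2 = (1 - t) ^ 2 * N := by rw [hN]; ring
    rw [hnrm] at h1
    have hr : r₂ ((1 - t) • T + t • y) ≤ (1 - t) * r₂ T + t * r₂ y :=
      hr₂.2 (Set.mem_univ T) (Set.mem_univ y) (by linarith) ht0.le (by ring)
    rw [← ha] at h1
    -- h1 : f + (1-t)*a - r₂ v - (1-t)^2 * k ≤ f + a - r₂ T - k
    have h4 : t * ((r₂ T - r₂ y) + (2 - t) * k) ≤ t * a := by nlinarith [h1, hr]
    have h5 : (r₂ T - r₂ y) + (2 - t) * k ≤ a := le_of_mul_le_mul_left h4 ht0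
    have h6 : 2 * η * ((r₂ T - r₂ y) + (2 - t) * k) ≤ 2 * η * a :=
      mul_le_mul_of_nonneg_left h5 (by positivity)
    have htk : t * (2 * η * k) = t * N := by rw [hk]
    nlinarith [h6, htk, htN]
  -- Step 2: subgradient inequality
  have hsub : ⟪g, T - y⟫ ≤ r₂ T - r₂ y := by have := hg T; linarith
  have haN : r₂ T - r₂ y + N / η ≤ a := by
    have hc : N / η * η = N := div_mul_cancel₀ N hη.ne'
    nlinarith [key, hη]
  have hstep : N / η ≤ a - ⟪g, T - y⟫ := by linarith
  -- norms and inner products of R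
  have hnR : ‖R‖ = (1 / η) * ‖T - y‖ := by
    rw [hR, norm_smul, Real.norm_eq_abs, abs_of_nonneg (by positivity : (0:ℝ) ≤ 1/η)]
  have hRR : ⟪R, R⟫ = ‖R‖ ^ 2 := real_inner_self_eq_norm_sq R
  have hGR : ⟪G, R⟫ = (1 / η) * a := by rw [hR, real_inner_smul_right, ha]
  have hgR : ⟪g, R⟫ = (1 / η) * ⟪g, T - y⟫ := by rw [hR, real_inner_smul_right]
  have hnYR : ⟪nY, R⟫ ≤ 0 := by
    rw [hR, real_inner_smul_right]
    have h7 := hnY T hT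
    have h1η : (0:ℝ) ≤ 1 / η := by positivity
    nlinarith
  have hRsq : ‖R‖ ^ 2 = (1 / η) ^ 2 * N := by rw [hnR, hN]; ring
  -- ⟪G - g, R⟫ ≥ ‖R‖²
  have hkey2 : ‖R‖ ^ 2 ≤ ⟪G, R⟫ - ⟪g, R⟫ := by
    rw [hGR, hgR, hRsq]
    have h8 := mul_le_mul_of_nonneg_left hstep
      (le_of_lt (by positivity : (0:ℝ) < 1 / η))
    have h9 : 1 / η * (N / η) = (1 / η) ^ 2 * N := by ring
    nlinarith [h8, h9]
  -- spectral bound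
  have hHR : ⟪Hyy R, R⟫ ≤ -μ * ‖R‖ ^ 2 := by
    rw [real_inner_comm]; exact hHyy R
  -- compute ⟪ey, R⟫
  have hiR : ⟪ey, R⟫ = ⟪R, R⟫ + (α * η) * ⟪Hyy R, R⟫
      + (α - 1) * (⟪R, R⟫ - ⟪G, R⟫ + ⟪g, R⟫) + ⟪nY, R⟫ := by
    rw [heq]
    simp only [inner_add_left, inner_sub_left, real_inner_smul_left]
    try ring
  have hlow : -(ε * ‖R‖) ≤ ⟪ey, R⟫ := by
    have h1 := abs_real_inner_le_norm ey R
    have h2 : -(‖ey‖ * ‖R‖) ≤ ⟪ey, R⟫ := neg_le_of_abs_le h1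
    nlinarith [norm_nonneg R]
  have hmain : (α * η * μ - 1) * ‖R‖ ^ 2 ≤ ε * ‖R‖ := by
    have hle : ⟪ey, R⟫ ≤ ‖R‖ ^ 2 - α * η * μ * ‖R‖ ^ 2 := by
      rw [hiR, hRR]
      have h1 : (α * η) * ⟪Hyy R, R⟫ ≤ (α * η) * (-μ * ‖R‖ ^ 2) :=
        mul_le_mul_of_nonneg_left hHR (by positivity)
      have h2 : (α - 1) * (‖R‖ ^ 2 - ⟪G, R⟫ + ⟪g, R⟫) ≤ 0 := by
        apply mul_nonpos_of_nonneg_of_nonpos (by linarith)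
        linarith [hkey2]
      nlinarith
    nlinarith [hlow]
  have hμαη : (0:ℝ) < μ * α * η := by positivity
  constructor
  · rw [div_mul_eq_mul_div, le_div_iff₀ hμαη]
    nlinarith [hmain, norm_nonneg R, sq_nonneg ‖R‖,
      mul_nonneg (by nlinarith : (0:ℝ) ≤ α * η * μ - 2) (sq_nonneg ‖R‖)]
  · rw [div_mul_eq_mul_div, div_le_iff₀ hμαη]
    nlinarith
end

section
/- In the PFBE setting with ∇f being L_f-Lipschitz, if (x, y) ∈ X × Y satisfies ‖R(x,y)‖ ≤ ε, then the point T(x,y) = y + ηR(x,y) satisfies dist(0, -∇_y f(x, T(x,y)) + ∂r₂(T(x,y)) + N_Y(T(x,y))) ≤ (1 + ηL_f)ε. -/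
open scoped RealInnerProductSpace

set_option maxHeartbeats 1600000

/-- If `‖R(x,y)‖ ≤ ε`, then `T(x,y)` is `(1 + ηL_f)ε`-stationary for the inner maximization
(Theorem `Theo_eps_Equivalence_Gamma`, `y`-stationarity estimate). -/
theorem stmt_15 {n p : ℕ} (Lf η ε : ℝ) (hLf : 0 < Lf) (hη : 0 < η)
    (f : EuclideanSpace ℝ (Fin n) → EuclideanSpace ℝ (Fin p) → ℝ)
    (Gy : EuclideanSpace ℝ (Fin n) → EuclideanSpace ℝ (Fin p) → EuclideanSpace ℝ (Fin p))
    (hgrad : ∀ x y, HasGradientAt (f x) (Gy x y) y)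
    (hLip : LipschitzWith (Real.toNNReal Lf)
      (fun q : (EuclideanSpace ℝ (Fin n)) × (EuclideanSpace ℝ (Fin p)) => Gy q.1 q.2))
    (Y : Set (EuclideanSpace ℝ (Fin p))) (hYc : IsClosed Y) (hYconv : Convex ℝ Y)
    (r₂ : EuclideanSpace ℝ (Fin p) → ℝ) (hr₂ : ConvexOn ℝ Set.univ r₂)
    (x : EuclideanSpace ℝ (Fin n)) (y : EuclideanSpace ℝ (Fin p)) (hy : y ∈ Y)
    (T : EuclideanSpace ℝ (Fin p)) (hT : T ∈ Y)
    (hTmax : ∀ v ∈ Y,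
      f x y + ⟪Gy x y, v - y⟫ - r₂ v - 1 / (2 * η) * ‖v - y‖ ^ 2 ≤
      f x y + ⟪Gy x y, T - y⟫ - r₂ T - 1 / (2 * η) * ‖T - y‖ ^ 2)
    (R : EuclideanSpace ℝ (Fin p)) (hR : R = (1 / η) • (T - y))
    (hRnorm : ‖R‖ ≤ ε) :
    ∃ g, (∀ z, r₂ z ≥ r₂ T + ⟪g, z - T⟫) ∧
      ∃ nT, (∀ z ∈ Y, ⟪nT, z - T⟫ ≤ 0) ∧
        ‖-Gy x T + g + nT‖ ≤ (1 + η * Lf) * ε := by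
  classical
  set G : EuclideanSpace ℝ (Fin p) := Gy x y with hG
  set w : EuclideanSpace ℝ (Fin p) := G - R with hwdef
  -- Step 1: w is a subgradient of r₂ + ι_Y at T.
  have hw : ∀ v ∈ Y, ⟪w, v - T⟫ ≤ r₂ v - r₂ T := by
    intro v hv
    have key : ∀ t : ℝ, 0 < t → t ≤ 1 →
        t * ⟪G, v - T⟫ ≤ t * (r₂ v - r₂ T) + 1 / (2*η) * (2 * t * ⟪T - y, v - T⟫
          + t^2 * ‖v - T‖^2) := by
      intro t ht0 ht1
      have hmem : (1 - t) • T + t • v ∈ Y := hYconv hT hv (by linarith) ht0.le (by ring)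
      have hvt := hTmax _ hmem
      have hdecomp : ((1 - t) • T + t • v) - y = (T - y) + t • (v - T) := by
        module
      have hinner : ⟪G, ((1 - t) • T + t • v) - y⟫
          = ⟪G, T - y⟫ + t * ⟪G, v - T⟫ := by
        rw [hdecomp, inner_add_right, real_inner_smul_right]
      have hnorm : ‖((1 - t) • T + t • v) - y‖^2
          = ‖T - y‖^2 + 2 * (t * ⟪T - y, v - T⟫) + t^2 * ‖v - T‖^2 := by
        rw [hdecomp, norm_add_sq_real, real_inner_smul_right, norm_smul]
        rw [Real.norm_eq_abs, abs_of_pos ht0]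
        ring
      have hconv : r₂ ((1 - t) • T + t • v) ≤ (1 - t) * r₂ T + t * r₂ v :=
        hr₂.2 (Set.mem_univ T) (Set.mem_univ v) (by linarith) ht0.le (by ring)
      rw [hinner, hnorm] at hvt
      have hη' : 0 < 1 / (2 * η) := by positivity
      nlinarith [hvt, hconv]
    have hRin : ⟪R, v - T⟫ = 1 / η * ⟪T - y, v - T⟫ := by
      rw [hR, real_inner_smul_left]
    have hmain : ⟪G, v - T⟫ - ⟪R, v - T⟫ ≤ r₂ v - r₂ T := by
      refine le_of_forall_pos_le_add ?_
      intro δ hδ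
      set t : ℝ := min 1 (2 * η * δ / (‖v - T‖^2 + 1)) with htdef
      have ht0 : 0 < t := by
        apply lt_min one_pos
        positivity
      have ht1 : t ≤ 1 := min_le_left _ _
      have htb : 1 / (2*η) * (t * ‖v - T‖^2) ≤ δ := by
        have h2 : t ≤ 2 * η * δ / (‖v - T‖^2 + 1) := min_le_right _ _
        have h3 : 0 < ‖v - T‖^2 + 1 := by positivity
        rw [le_div_iff₀ h3] at h2
        have h4 : t * ‖v - T‖^2 ≤ 2 * η * δ := by nlinarith
        calc 1 / (2*η) * (t * ‖v - T‖^2) ≤ 1 / (2*η) * (2 * η * δ) := by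
              apply mul_le_mul_of_nonneg_left h4 (by positivity)
          _ = δ := by field_simp
      have := key t ht0 ht1
      have hdiv : ⟪G, v - T⟫ ≤ (r₂ v - r₂ T) + 1/η * ⟪T - y, v - T⟫ + δ := by
        rw [← mul_le_mul_iff_right₀ ht0]
        have hη' : (0:ℝ) < η := hη
        have e1 : 1 / (2*η) * (2 * t * ⟪T - y, v - T⟫) = t * (1/η * ⟪T - y, v - T⟫) := by
          field_simp
        have e2 : 1 / (2*η) * (t^2 * ‖v - T‖^2) = t * (1 / (2*η) * (t * ‖v - T‖^2)) := by
          ring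
        nlinarith [this, mul_le_mul_of_nonneg_left htb ht0.le]
      linarith [hdiv, hRin.le, hRin.ge]
    calc ⟪w, v - T⟫ = ⟪G, v - T⟫ - ⟪R, v - T⟫ := by rw [hwdef, inner_sub_left]
      _ ≤ r₂ v - r₂ T := hmain
  -- continuity of r₂
  have hr₂cont : Continuous r₂ := hr₂.locallyLipschitz.continuous
  -- the function h
  set h : EuclideanSpace ℝ (Fin p) → ℝ := fun d => r₂ (T + d) - r₂ T - ⟪w, d⟫ with hhdef
  have hcont : Continuous h := by
    apply Continuous.sub
    · exact (hr₂cont.comp (continuous_const.add continuous_id)).sub continuous_const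
    · exact continuous_const.inner continuous_id
  have hzero : h 0 = 0 := by simp [hhdef]
  have hnonneg : ∀ d, T + d ∈ Y → 0 ≤ h d := by
    intro d hd
    have := hw (T + d) hd
    simpa [hhdef, add_sub_cancel_left] using this
  have hhconv : ∀ d₁ d₂ : EuclideanSpace ℝ (Fin p), ∀ a b : ℝ, 0 ≤ a → 0 ≤ b → a + b = 1 →
      h (a • d₁ + b • d₂) ≤ a * h d₁ + b * h d₂ := by
    intro d₁ d₂ a b ha hb hab
    have hdecomp : T + (a • d₁ + b • d₂) = a • (T + d₁) + b • (T + d₂) := by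
      have h1 : a • (T + d₁) + b • (T + d₂) = (a + b) • T + (a • d₁ + b • d₂) := by module
      rw [h1, hab, one_smul]
    have hc := hr₂.2 (Set.mem_univ (T + d₁)) (Set.mem_univ (T + d₂)) ha hb hab
    simp only [smul_eq_mul] at hc
    have hi : ⟪w, a • d₁ + b • d₂⟫ = a * ⟪w, d₁⟫ + b * ⟪w, d₂⟫ := by
      rw [inner_add_right, real_inner_smul_right, real_inner_smul_right]
    have hTT : a * r₂ T + b * r₂ T = r₂ T := by rw [← add_mul, hab, one_mul]
    simp only [hhdef, hdecomp, hi]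
    nlinarith [hc, hTT]
  -- Sets for separation
  set A : Set (EuclideanSpace ℝ (Fin p) × ℝ) := {q | h q.1 < q.2} with hAdef
  set B : Set (EuclideanSpace ℝ (Fin p) × ℝ) := {q | T + q.1 ∈ Y ∧ q.2 ≤ 0} with hBdef
  have hAopen : IsOpen A := isOpen_lt (hcont.comp continuous_fst) continuous_snd
  have hAconv : Convex ℝ A := by
    intro q₁ hq₁ q₂ hq₂ a b ha hb hab
    simp only [hAdef, Set.mem_setOf_eq, Prod.fst_add, Prod.snd_add, Prod.smul_fst,
      Prod.smul_snd, smul_eq_mul] at *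
    rcases ha.lt_or_eq with ha' | ha'
    · calc h (a • q₁.1 + b • q₂.1) ≤ a * h q₁.1 + b * h q₂.1 := hhconv _ _ _ _ ha hb hab
        _ < a * q₁.2 + b * q₂.2 := by
          have h1 : a * h q₁.1 < a * q₁.2 := by exact (mul_lt_mul_iff_right₀ ha').2 hq₁
          have h2 : b * h q₂.1 ≤ b * q₂.2 := mul_le_mul_of_nonneg_left hq₂.le hb
          linarith
    · have hb1 : b = 1 := by linarith
      calc h (a • q₁.1 + b • q₂.1) ≤ a * h q₁.1 + b * h q₂.1 := hhconv _ _ _ _ ha hb hab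
        _ < a * q₁.2 + b * q₂.2 := by
          rw [← ha', hb1]; simpa using hq₂
  have hBconv : Convex ℝ B := by
    intro q₁ hq₁ q₂ hq₂ a b ha hb hab
    simp only [hBdef, Set.mem_setOf_eq, Prod.fst_add, Prod.snd_add, Prod.smul_fst,
      Prod.smul_snd, smul_eq_mul] at *
    constructor
    · have hdecomp : T + (a • q₁.1 + b • q₂.1) = a • (T + q₁.1) + b • (T + q₂.1) := by
        have h1 : a • (T + q₁.1) + b • (T + q₂.1) = (a + b) • T + (a • q₁.1 + b • q₂.1) := by
          module
        rw [h1, hab, one_smul]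
      rw [hdecomp]
      exact hYconv hq₁.1 hq₂.1 ha hb hab
    · nlinarith [hq₁.2, hq₂.2, mul_le_mul_of_nonneg_left hq₁.2 ha,
        mul_le_mul_of_nonneg_left hq₂.2 hb]
  have hdisj : Disjoint A B := by
    rw [Set.disjoint_left]
    intro q hqA hqB
    have h1 : h q.1 < q.2 := hqA
    have h2 : T + q.1 ∈ Y ∧ q.2 ≤ 0 := hqB
    have h3 := hnonneg q.1 h2.1
    linarith [h2.2]
  obtain ⟨φ, u, hAsep, hBsep⟩ := geometric_hahn_banach_open hAconv hAopen hBconv hdisj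
  set α : ℝ := φ (0, 1) with hαdef
  have hφ : ∀ (d : EuclideanSpace ℝ (Fin p)) (t : ℝ), φ (d, t) = φ (d, 0) + t * α := by
    intro d t
    have : (d, t) = (d, (0:ℝ)) + t • ((0:EuclideanSpace ℝ (Fin p)), (1:ℝ)) := by
      simp [Prod.ext_iff]
    rw [this, map_add, map_smul, smul_eq_mul, hαdef]
  have hu0 : u ≤ 0 := by
    have h0B : ((0 : EuclideanSpace ℝ (Fin p)), (0:ℝ)) ∈ B := by
      constructor
      · simpa using hT
      · exact le_refl 0
    have := hBsep _ h0B
    have hz : φ ((0:EuclideanSpace ℝ (Fin p)), (0:ℝ)) = 0 := by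
      have : ((0:EuclideanSpace ℝ (Fin p)), (0:ℝ)) = (0 : EuclideanSpace ℝ (Fin p) × ℝ) := rfl
      rw [this, map_zero]
    linarith [this, hz.le, hz.ge]
  have hAt : ∀ t : ℝ, 0 < t → t * α < u := by
    intro t ht
    have hmem : ((0:EuclideanSpace ℝ (Fin p)), t) ∈ A := by
      simp only [hAdef, Set.mem_setOf_eq]
      rw [hzero]; exact ht
    have := hAsep _ hmem
    rw [hφ] at this
    have hz : φ ((0:EuclideanSpace ℝ (Fin p)), (0:ℝ)) = 0 := by
      have : ((0:EuclideanSpace ℝ (Fin p)), (0:ℝ)) = (0 : EuclideanSpace ℝ (Fin p) × ℝ) := rfl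
      rw [this, map_zero]
    linarith
  have hα : α < 0 := by
    have := hAt 1 one_pos
    rw [one_mul] at this
    linarith
  have hu0' : 0 ≤ u := by
    by_contra hc
    push_neg at hc
    have ht : 0 < u / (2 * α) := div_pos_of_neg_of_neg hc (by linarith)
    have := hAt _ ht
    have he : u / (2 * α) * α = u / 2 := by
      have hαne : α ≠ 0 := ne_of_lt hα
      field_simp
    rw [he] at this
    linarith
  -- key inequality (i)
  have hkey : ∀ d : EuclideanSpace ℝ (Fin p), φ (d, 0) + α * h d ≤ 0 := by
    intro d
    refine le_of_forall_pos_le_add ?_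
    intro ε' hε'
    have hmem : (d, h d + ε' / (-α)) ∈ A := by
      simp only [hAdef, Set.mem_setOf_eq]
      have : 0 < ε' / (-α) := div_pos hε' (by linarith)
      linarith
    have := hAsep _ hmem
    rw [hφ] at this
    have he : (h d + ε' / (-α)) * α = α * h d - ε' := by
      have hαne : -α ≠ 0 := by intro hh; rw [neg_eq_zero] at hh; exact (ne_of_lt hα) hh
      field_simp
      rw [mul_add, mul_neg, mul_div_assoc', mul_div_cancel_left₀ _ (ne_of_lt hα)]; ring
    rw [he] at this
    linarith
  -- define g₀ via Riesz
  set L' : EuclideanSpace ℝ (Fin p) →L[ℝ] ℝ := φ.comp (ContinuousLinearMap.inl ℝ (EuclideanSpace ℝ (Fin p)) ℝ) with hL'def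
  set g₀ : EuclideanSpace ℝ (Fin p) := (InnerProductSpace.toDual ℝ (EuclideanSpace ℝ (Fin p))).symm L' with hg₀def
  have hg₀ : ∀ d : EuclideanSpace ℝ (Fin p), ⟪g₀, d⟫ = φ (d, 0) := by
    intro d
    rw [hg₀def]
    rw [InnerProductSpace.toDual_symm_apply]
    rfl
  set s : EuclideanSpace ℝ (Fin p) := (-α)⁻¹ • g₀ with hsdef
  refine ⟨w + s, ?_, -s, ?_, ?_⟩
  · -- subgradient property
    intro z
    have hd := hkey (z - T)
    have hα' : 0 < (-α)⁻¹ := by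
      have : 0 < -α := by linarith
      positivity
    have h1 : (-α)⁻¹ * φ (z - T, 0) ≤ h (z - T) := by
      rw [← mul_le_mul_iff_right₀ (show (0:ℝ) < -α by linarith)]
      have hαne : (-α) ≠ 0 := ne_of_gt (by linarith)
      have he : -α * ((-α)⁻¹ * φ (z - T, 0)) = φ (z - T, 0) :=
        mul_inv_cancel_left₀ hαne _
      rw [he]
      nlinarith [hd]
    have h2 : ⟪w + s, z - T⟫ = ⟪w, z - T⟫ + (-α)⁻¹ * φ (z - T, 0) := by
      rw [inner_add_left, hsdef, real_inner_smul_left, hg₀]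
    have h3 : h (z - T) = r₂ z - r₂ T - ⟪w, z - T⟫ := by
      simp [hhdef, add_sub_cancel]
    rw [ge_iff_le]
    rw [h2]
    rw [h3] at h1
    linarith
  · -- normal cone property
    intro z hz
    have hmem : (z - T, (0:ℝ)) ∈ B := by
      constructor
      · simpa [add_sub_cancel] using hz
      · exact le_refl 0
    have := hBsep _ hmem
    have hφpos : 0 ≤ φ (z - T, 0) := le_trans hu0' this
    have hα' : 0 ≤ (-α)⁻¹ := by
      have : 0 < -α := by linarith
      positivity
    have : ⟪-s, z - T⟫ = -((-α)⁻¹ * φ (z - T, 0)) := by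
      rw [inner_neg_left, hsdef, real_inner_smul_left, hg₀]
    rw [this]
    simp only [neg_nonpos]
    exact mul_nonneg hα' hφpos
  · -- norm bound
    have hsimp : -Gy x T + (w + s) + -s = (Gy x y - Gy x T) + -R := by
      rw [hwdef, hG]; abel
    rw [hsimp]
    have hTy : T - y = η • R := by
      rw [hR, smul_smul]
      rw [mul_one_div, div_self hη.ne', one_smul]
    have hlip : ‖Gy x y - Gy x T‖ ≤ Lf * (η * ‖R‖) := by
      have := hLip.dist_le_mul (x, y) (x, T)
      rw [Prod.dist_eq] at this
      have hd1 : dist x x = 0 := dist_self x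
      have hmax : max (dist x x) (dist y T) = dist y T := by
        rw [hd1]; exact max_eq_right dist_nonneg
      rw [hmax] at this
      have hc : ((Real.toNNReal Lf : NNReal) : ℝ) = Lf := Real.coe_toNNReal _ hLf.le
      rw [hc] at this
      have hdist : dist y T = η * ‖R‖ := by
        rw [dist_eq_norm, ← norm_neg, neg_sub, hTy, norm_smul, Real.norm_eq_abs,
          abs_of_pos hη]
      rw [hdist] at this
      calc ‖Gy x y - Gy x T‖ = dist (Gy x y) (Gy x T) := (dist_eq_norm _ _).symm
        _ ≤ Lf * (η * ‖R‖) := this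
    calc ‖(Gy x y - Gy x T) + -R‖ ≤ ‖Gy x y - Gy x T‖ + ‖R‖ := by
          rw [← norm_neg R] ; exact norm_add_le _ _
      _ ≤ Lf * (η * ‖R‖) + ‖R‖ := by linarith
      _ = (1 + η * Lf) * ‖R‖ := by ring
      _ ≤ (1 + η * Lf) * ε := by
          apply mul_le_mul_of_nonneg_left hRnorm
          positivity
end

section
/- Let X ⊆ ℝⁿ be closed convex and g: ℝⁿ → ℝ locally Lipschitz. For any absolutely continuous curve x: [0,∞) → X satisfying ẋ(t) ∈ -(v(t) + N_X(x(t))) for a.e. t (where v(t) is measurable and bounded), every normal-cone component n(t) ∈ N_X(x(t)) appearing in the decomposition ẋ(t) = -(v(t) + n(t)) satisfies ⟨n(t), ẋ(t)⟩ = 0 for almost every t. -/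
open scoped RealInnerProductSpace

/-- For a curve in a closed convex set `X` following `ẋ(t) ∈ -(v(t) + N_X(x(t)))`, the
normal-cone component is a.e. orthogonal to the velocity: `⟪n(t), ẋ(t)⟫ = 0` a.e. -/
theorem stmt_17 {d : ℕ} (X : Set (EuclideanSpace ℝ (Fin d)))
    (hXc : IsClosed X) (hXconv : Convex ℝ X)
    (x v nf x' : ℝ → EuclideanSpace ℝ (Fin d)) (Cv : ℝ)
    (hxcont : Continuous x)
    (hmem : ∀ t : ℝ, 0 ≤ t → x t ∈ X)
    (hvmeas : Measurable v) (hvb : ∀ t, ‖v t‖ ≤ Cv)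
    (hode : ∀ᵐ t ∂(MeasureTheory.volume.restrict (Set.Ici (0 : ℝ))),
      HasDerivAt x (x' t) t ∧ x' t = -(v t + nf t) ∧ (∀ z ∈ X, ⟪nf t, z - x t⟫ ≤ 0)) :
    ∀ᵐ t ∂(MeasureTheory.volume.restrict (Set.Ici (0 : ℝ))), ⟪nf t, x' t⟫ = 0 := by
  have hne : ∀ᵐ t ∂(MeasureTheory.volume.restrict (Set.Ici (0 : ℝ))), t ≠ 0 := by
    refine MeasureTheory.ae_restrict_of_ae ?_
    have : (MeasureTheory.volume ({0} : Set ℝ)) = 0 := MeasureTheory.measure_singleton 0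
    filter_upwards [MeasureTheory.measure_eq_zero_iff_ae_notMem.mp this] with t ht
    simpa using ht
  have hmemae : ∀ᵐ t ∂(MeasureTheory.volume.restrict (Set.Ici (0 : ℝ))),
      t ∈ Set.Ici (0 : ℝ) := MeasureTheory.ae_restrict_mem measurableSet_Ici
  filter_upwards [hode, hne, hmemae] with t ht htne htmem
  obtain ⟨hderiv, _, hnormal⟩ := ht
  have htpos : 0 < t := lt_of_le_of_ne htmem (Ne.symm htne)
  -- the function s ↦ ⟪nf t, x s⟫ has derivative ⟪nf t, x' t⟫ at t
  have hφ : HasDerivAt (fun s => ⟪nf t, x s⟫) ⟪nf t, x' t⟫ t := by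
    have := (hasDerivAt_const t (nf t)).inner ℝ hderiv
    simpa using this
  -- it has a local max at t
  have hmax : IsLocalMax (fun s => ⟪nf t, x s⟫) t := by
    have : ∀ s ∈ Set.Ici (0 : ℝ), ⟪nf t, x s⟫ ≤ ⟪nf t, x t⟫ := by
      intro s hs
      have h := hnormal (x s) (hmem s hs)
      have : ⟪nf t, x s⟫ - ⟪nf t, x t⟫ ≤ 0 := by
        rw [← inner_sub_right]; exact h
      linarith
    have hnhds : Set.Ici (0 : ℝ) ∈ nhds t := Ici_mem_nhds htpos
    exact Filter.eventually_of_mem hnhds fun s hs => this s hs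
  exact hmax.hasDerivAt_eq_zero hφ
end
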